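/- Let d ≥ 1 and let X be a β-set. Set x_i = |X_i^{(d)}| for i ∈ {0,…,d−1}, where X_i^{(d)} = {k ∈ ℕ : i + kd ∈ X}, put δ = (x_0 d, 1 + x_1 d, …, (d−1) + x_{d−1} d; d), let S = s_d(X), Q = Q(S) its balanced quotient, and C_d(X) = s_d^{-1}(C(S)) the d-core of X. Then there is a multiset equality 𝓗(X) = 𝓗(C_d(X)) ∪ abs(𝓗^δ(Q)), where abs(𝓗^δ(Q)) = {|h| : h ∈ 𝓗^δ(Q)} and ∪ is multiset union (sum). (Since 𝓗(X) equals the multiset of hook lengths of the partition p(X) and 𝓗(C_d(X)) that of its d-core, this says 𝓗(λ) = 𝓗(λ_(d)) ∪ abs(𝓗^δ(Q)) for λ = p(X).) -/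

import Mathlib

/-- `X^{+s} = (X + s) ∪ {0,…,s−1}` for a β-set `X`. -/
def shiftUp (X : Finset ℕ) (s : ℕ) : Finset ℕ :=
  X.image (· + s) ∪ Finset.range s

/-- The `d`-symbol `s_d(X)` associated to a β-set `X`:
`X_i^{(d)} = {k ∈ ℕ : i + k*d ∈ X}`. -/
def sd (d : ℕ) (X : Finset ℕ) : Fin d → Finset ℕ :=
  fun i => (X.filter fun a => a % d = (i : ℕ)).image fun a => a / d

/-- The inverse of `s_d`, recovering the β-set of a `d`-symbol. -/
def sdInv (d : ℕ) (S : Fin d → Finset ℕ) : Finset ℕ :=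
  Finset.univ.biUnion fun i => (S i).image fun k => (i : ℕ) + k * d

/-- Hooks of a β-set `X`: pairs `(a,b)` with `a > b`, `a ∈ X`, `b ∉ X`. -/
def betaHooks (X : Finset ℕ) : Finset (ℕ × ℕ) :=
  (X ×ˢ Finset.range (X.sup id + 1)).filter fun p => p.2 < p.1 ∧ p.2 ∉ X

/-- Hooks of a `d`-symbol `S`: quadruples `(a,b,i,j)` with `a ∈ S i`, `b ∉ S j`,
and either `a > b`, or `a = b` and `i > j`. -/
def symbolHooks {d : ℕ} (S : Fin d → Finset ℕ) : Finset (ℕ × ℕ × Fin d × Fin d) :=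
  (Finset.range ((Finset.univ.sup fun i => (S i).sup id) + 1) ×ˢ
      Finset.range ((Finset.univ.sup fun i => (S i).sup id) + 1) ×ˢ
      (Finset.univ : Finset (Fin d)) ×ˢ (Finset.univ : Finset (Fin d))).filter
    fun z => z.1 ∈ S z.2.2.1 ∧ z.2.1 ∉ S z.2.2.2 ∧
      (z.2.1 < z.1 ∨ (z.1 = z.2.1 ∧ z.2.2.2 < z.2.2.1))

/-- The partition `p(X)` of a β-set `X = {a_1 > … > a_t}`, as the multiset of the
nonzero numbers among `a_i − (t−i)`; the element `a` contributes the part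
`a − #{b ∈ X : b < a}`. -/
def partitionOf (X : Finset ℕ) : Multiset ℕ :=
  Multiset.filter (· ≠ 0) (X.val.map fun a => a - (X.filter (· < a)).card)

/-- `r`, the maximal number of parts among the partitions `p(X_i)` of a `d`-symbol. -/
def quotCard {d : ℕ} (S : Fin d → Finset ℕ) : ℕ :=
  Finset.univ.sup fun i => Multiset.card (partitionOf (S i))

/-- `Y` is the balanced quotient `Q(S)` of `S`: each `Y i` is the (unique) β-set of
cardinality `r` with `p(Y i) = p(S i)`, where `r` is the maximal number of parts
among the `p(S i)`. -/
def IsBalancedQuotient {d : ℕ} (S Y : Fin d → Finset ℕ) : Prop :=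
  ∀ i, (Y i).card = quotCard S ∧ partitionOf (Y i) = partitionOf (S i)

/-- The core `C(S) = ([x_0],…,[x_{d−1}])` of a `d`-symbol, `x_i = |X_i|`. -/
def coreSymbol {d : ℕ} (S : Fin d → Finset ℕ) : Fin d → Finset ℕ :=
  fun i => Finset.range (S i).card

/-- The `δ`-length `k(a−b) + c_i − c_j` of a hook `(a,b,i,j)`, for the
`d`-hook data tuple `δ = (c_0,…,c_{d−1};k)`. -/
noncomputable def hookLen {d : ℕ} (c : Fin d → ℝ) (k : ℝ)
    (z : ℕ × ℕ × Fin d × Fin d) : ℝ :=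
  k * ((z.1 - z.2.1 : ℕ) : ℝ) + c z.2.2.1 - c z.2.2.2

/-- The multiset `𝓗^δ(S)` of `δ`-lengths of all hooks of `S`. -/
noncomputable def hookLens {d : ℕ} (c : Fin d → ℝ) (k : ℝ)
    (S : Fin d → Finset ℕ) : Multiset ℝ :=
  (symbolHooks S).val.map (hookLen c k)

/-- `H_{ij}^ℓ(S)`, the set of hooks `(a,b,i,j)` of `S` with `a − b = ℓ`. -/
def Hij {d : ℕ} (S : Fin d → Finset ℕ) (i j : Fin d) (ℓ : ℕ) :
    Finset (ℕ × ℕ × Fin d × Fin d) :=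
  (symbolHooks S).filter fun z => z.2.2.1 = i ∧ z.2.2.2 = j ∧ z.1 - z.2.1 = ℓ

/-- The sign-modified length `h̄^{δ_S}` (on hooks of the balanced quotient), where
`x` records the cardinalities `x_i = |X_i|` of `S`, and `δ_S = (c_i + x_i k; k)`.
For a hook `z = (a,b,u,v)` with `ℓ = a − b`: relabelling so that `Δ = x_i − x_j ≥ 0`,
the sign is `+` if `z` lies in position `(i,j)`, or in position `(j,i)` with `ℓ > Δ`,
or in position `(j,i)` with `ℓ = Δ` and `i < j`; otherwise the sign is `−`. -/
noncomputable def signedLen {d : ℕ} (x : Fin d → ℕ) (c : Fin d → ℝ) (k : ℝ)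
    (z : ℕ × ℕ × Fin d × Fin d) : ℝ :=
  if x z.2.2.2 ≤ x z.2.2.1 then
    k * ((z.1 - z.2.1 : ℕ) : ℝ) + (c z.2.2.1 + (x z.2.2.1 : ℝ) * k)
      - (c z.2.2.2 + (x z.2.2.2 : ℝ) * k)
  else if x z.2.2.2 - x z.2.2.1 < z.1 - z.2.1 ∨
      (z.1 - z.2.1 = x z.2.2.2 - x z.2.2.1 ∧ (z.2.2.2 : ℕ) < (z.2.2.1 : ℕ)) then
    k * ((z.1 - z.2.1 : ℕ) : ℝ) + (c z.2.2.1 + (x z.2.2.1 : ℝ) * k)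
      - (c z.2.2.2 + (x z.2.2.2 : ℝ) * k)
  else
    -(k * ((z.1 - z.2.1 : ℕ) : ℝ) + (c z.2.2.1 + (x z.2.2.1 : ℝ) * k)
      - (c z.2.2.2 + (x z.2.2.2 : ℝ) * k))

/-- The permutation `σ_{d,ℓ,e}` of `ℕ`:
`σ(r(dℓ) + sd + t) = r(dℓ) + sd + ((t + re) mod d)`. -/
def twistFun (d ℓ e : ℕ) (n : ℕ) : ℕ :=
  d * ℓ * (n / (d * ℓ)) + d * (n % (d * ℓ) / d) + (n % d + n / (d * ℓ) * e) % d

/-!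
Write `x_i = |X_i|`, `r = |Y_i|` and `c_i = i + d x_i`. A hook `(a', b')` of `X` with `a' ≡ i` and
`b' ≡ j (mod d)` is a pair `a ∈ X_i`, `b ∉ X_j` with `a' - b' = d (a - b) + i - j > 0`, so all three
multisets split over the ordered pairs `(i, j)`. For `N` large, `X_i^{+(N - x_i)}` and
`Y_i^{+(N - r)}` are the same β-set `A_i`, having the same cardinality and the same partition. In
these coordinates the `(i, j)`-hooks of `X`, of the core (where `A_i = [N]`) and of `Q` all have
the length `d (a - b) + c_i - c_j`; for `X` and the core they are the pairs on which this length is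
positive, for `Q` those on which `d (a - b) + i - j` is.

Counting the pairs of a fixed gap `a - b = -s ≤ 0`, sets of equal size with `[0, s) ⊆ A_j` satisfy
`#{a ∈ A_i | a + s ∉ A_j} = s + #{b ∈ A_j | b - s ∉ A_i}`, and `s` is the count for the core. So the
`(i, j)`-hooks of `X` are those of the core, the `(i, j)`-hooks of `Q` of positive length, and the
negatives of the `(j, i)`-hooks of `Q` of non-positive length.
-/

open Finset

theorem Int.mul_add_pos_iff {d k e : ℤ} (he : |e| < d) :
    0 < d * k + e ↔ 0 < k ∨ k = 0 ∧ 0 < e := by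
  rw [abs_lt] at he
  rcases lt_trichotomy k 0 with hk | rfl | hk
  · have : d * k ≤ -d := by nlinarith
    constructor <;> intro h <;> omega
  · simp
  · have : d ≤ d * k := by nlinarith
    constructor <;> intro h <;> omega

theorem card_sdiff_eq_add_card_sdiff {α : Type*} [DecidableEq α] {A B : Finset α} {s : ℕ}
    (h : A.card = B.card + s) : #(A \ B) = s + #(B \ A) := by
  have hA := card_sdiff_add_card A B
  have hB := card_sdiff_add_card B A
  rw [union_comm] at hB
  omega

theorem Multiset.count_map_neg (M : Multiset ℤ) (t : ℤ) :
    (M.map Neg.neg).count t = M.count (-t) := by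
  rw [← neg_neg t, Multiset.count_map_eq_count' _ _ neg_injective, neg_neg]

theorem Multiset.map_abs_eq {α : Type*} [AddCommGroup α] [LinearOrder α]
    [IsOrderedAddMonoid α] (M : Multiset α) :
    M.map abs = M.filter (0 < ·) + (M.filter (¬ 0 < ·)).map Neg.neg := by
  conv_lhs => rw [← Multiset.filter_add_not (0 < ·) M]
  rw [Multiset.map_add]
  congr 1
  · exact (Multiset.map_congr rfl fun x hx => abs_of_pos (Multiset.of_mem_filter hx)).trans
      (Multiset.map_id' _)
  · refine Multiset.map_congr rfl fun x hx => abs_of_nonpos ?_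
    exact not_lt.1 (Multiset.mem_filter.1 hx).2

theorem Finset.sum_singleton_eq_map {α β : Type*} (s : Finset α) (f : α → β) :
    ∑ x ∈ s, ({f x} : Multiset β) = s.val.map f :=
  Multiset.bind_singleton s.val f

theorem Multiset.map_finset_sum {ι α β : Type*} (f : α → β) (s : Finset ι)
    (g : ι → Multiset α) : (∑ i ∈ s, g i).map f = ∑ i ∈ s, (g i).map f :=
  map_sum (Multiset.mapAddMonoidHom f) g s

theorem Finset.sum_sum_eq_sum_sum_add_swap {ι M : Type*} [AddCommMonoid M] (s : Finset ι)
    {f g h : ι → ι → M} (hfg : ∀ i ∈ s, ∀ j ∈ s, f i j = g i j + h j i) :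
    ∑ i ∈ s, ∑ j ∈ s, f i j = ∑ i ∈ s, ∑ j ∈ s, (g i j + h i j) := by
  rw [sum_congr rfl fun i hi => sum_congr rfl fun j hj => hfg i hi j hj]
  simp only [sum_add_distrib]
  exact congrArg _ sum_comm

/-! ### Padding a β-set -/

theorem mem_shiftUp {A : Finset ℕ} {s n : ℕ} :
    n ∈ shiftUp A s ↔ n < s ∨ s ≤ n ∧ n - s ∈ A := by
  simp only [shiftUp, mem_union, mem_image, mem_range]
  constructor
  · rintro (⟨a, ha, rfl⟩ | h)
    · exact Or.inr ⟨by omega, by simpa using ha⟩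
    · exact Or.inl h
  · rintro (h | ⟨h, ha⟩)
    · exact Or.inr h
    · exact Or.inl ⟨n - s, ha, by omega⟩

theorem card_shiftUp (A : Finset ℕ) (s : ℕ) : (shiftUp A s).card = A.card + s := by
  rw [shiftUp, card_union_of_disjoint, card_image_of_injective _ (add_left_injective s),
    card_range]
  simp only [disjoint_left, mem_image, mem_range]
  omega

theorem shiftUp_range (a s : ℕ) : shiftUp (range a) s = range (a + s) := by
  ext n
  simp only [mem_shiftUp, mem_range]
  omega

theorem shiftUp_val (A : Finset ℕ) (s : ℕ) :
    (shiftUp A s).val = A.val.map (· + s) + (range s).val := by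
  have hdisj : Disjoint (A.image (· + s)) (range s) := by simp [disjoint_left]
  rw [shiftUp, ← disjUnion_eq_union _ _ hdisj]
  exact congrArg (· + _) (image_val_of_injOn (add_left_injective s).injOn)

theorem exists_shiftUp_eq {B : Finset ℕ} {s : ℕ} (h : range s ⊆ B) :
    ∃ B', shiftUp B' s = B := by
  refine ⟨(B.filter (s ≤ ·)).image (· - s), ?_⟩
  ext n
  simp only [mem_shiftUp, mem_image, mem_filter]
  constructor
  · rintro (hn | ⟨hn, b, ⟨hb, hsb⟩, hbn⟩)
    · exact h (mem_range.2 hn)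
    · rwa [show n = b by omega]
  · intro hn
    by_cases hsn : s ≤ n
    · exact Or.inr ⟨hsn, n, ⟨hn, hsn⟩, rfl⟩
    · exact Or.inl (by omega)

theorem filter_shiftUp_lt_add (A : Finset ℕ) (s a : ℕ) :
    (shiftUp A s).filter (· < a + s) = shiftUp (A.filter (· < a)) s := by
  ext n
  simp only [mem_filter, mem_shiftUp]
  constructor
  · rintro ⟨hn | ⟨hsn, hA⟩, hlt⟩
    exacts [Or.inl hn, Or.inr ⟨hsn, hA, by omega⟩]
  · rintro (hn | ⟨hsn, hA, hlt⟩)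
    exacts [⟨Or.inl hn, by omega⟩, ⟨Or.inr ⟨hsn, hA⟩, by omega⟩]

theorem filter_shiftUp_lt_of_le (A : Finset ℕ) {s k : ℕ} (hk : k ≤ s) :
    (shiftUp A s).filter (· < k) = range k := by
  ext n
  simp only [mem_filter, mem_shiftUp, mem_range]
  omega

/-- `partitionOf X` with the zero parts kept. -/
def betaParts (X : Finset ℕ) : Multiset ℕ :=
  X.val.map fun a => a - #(X.filter (· < a))

theorem card_betaParts (X : Finset ℕ) : Multiset.card (betaParts X) = X.card := by
  simp [betaParts]

theorem betaParts_eq_partitionOf_add (X : Finset ℕ) :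
    betaParts X = partitionOf X +
      Multiset.replicate (X.card - Multiset.card (partitionOf X)) 0 := by
  have hsplit := Multiset.filter_add_not (· ≠ 0) (betaParts X)
  simp only [ne_eq, not_not, Multiset.filter_eq' _ 0] at hsplit
  have hcard := congrArg Multiset.card hsplit
  rw [Multiset.card_add, Multiset.card_replicate, card_betaParts] at hcard
  rw [partitionOf, ← betaParts, ← hcard, Nat.add_sub_cancel_left] at *
  exact hsplit.symm

theorem betaParts_insert {a : ℕ} {s : Finset ℕ} (has : ∀ x ∈ s, x < a) :
    betaParts (insert a s) = (a - #s) ::ₘ betaParts s := by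
  have ha : a ∉ s := fun h => lt_irrefl a (has a h)
  rw [betaParts, insert_val_of_notMem ha, Multiset.map_cons, betaParts]
  refine congrArg₂ _ ?_ (Multiset.map_congr rfl fun x hx => ?_)
  · rw [filter_insert, if_neg (lt_irrefl a), filter_true_of_mem has]
  · rw [filter_insert, if_neg (not_lt.2 (has x hx).le)]

theorem le_of_mem_betaParts_insert {a : ℕ} {s : Finset ℕ} (has : ∀ x ∈ s, x < a)
    {m : ℕ} (hm : m ∈ betaParts (insert a s)) : m ≤ a - #s := by
  rw [betaParts_insert has, Multiset.mem_cons] at hm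
  obtain rfl | hm := hm
  · exact le_rfl
  obtain ⟨x, hx, rfl⟩ := Multiset.mem_map.1 hm
  have hxa := has x hx
  have hsplit := card_filter_add_card_filter_not (s := s) (p := (· < x))
  have hbelow : #(s.filter (· < x)) ≤ x := by
    simpa using card_le_card (t := range x) fun b hb => mem_range.2 (mem_filter.1 hb).2
  have habove : #(s.filter fun b => ¬ b < x) ≤ a - x := by
    simpa using card_le_card (t := Ico x a) fun b hb => by
      simp only [mem_filter] at hb
      exact mem_Ico.2 ⟨hb.2, has b hb.1⟩
  omega

theorem card_le_of_forall_lt {a : ℕ} {s : Finset ℕ} (has : ∀ x ∈ s, x < a) : #s ≤ a := by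
  simpa using card_le_card (t := range a) fun x hx => mem_range.2 (has x hx)

theorem betaParts_injective : Function.Injective betaParts := by
  intro X Y h
  induction X using Finset.induction_on_max generalizing Y with
  | empty =>
    have := congrArg Multiset.card h
    rw [card_betaParts, card_betaParts] at this
    exact (card_eq_zero.1 this.symm).symm
  | insert a s has ih =>
    have hY : Y.Nonempty := by
      rw [← card_pos, ← card_betaParts, ← h, card_betaParts]
      exact card_pos.2 (insert_nonempty a s)
    set b := Y.max' hY
    have hbt : ∀ y ∈ Y.erase b, y < b := fun y hy =>
      lt_of_le_of_ne (Y.le_max' y (mem_of_mem_erase hy)) (ne_of_mem_erase hy)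
    rw [← insert_erase (Y.max'_mem hY)] at h ⊢
    have h1 := le_of_mem_betaParts_insert has (h ▸ betaParts_insert hbt ▸
      Multiset.mem_cons_self (b - #(Y.erase b)) _)
    have h2 := le_of_mem_betaParts_insert hbt (h ▸ betaParts_insert has ▸
      Multiset.mem_cons_self (a - #s) _)
    rw [betaParts_insert has, betaParts_insert hbt] at h
    have hcard := congrArg Multiset.card h
    simp only [Multiset.card_cons, card_betaParts, add_left_inj] at hcard
    have := card_le_of_forall_lt has
    have := card_le_of_forall_lt hbt
    have hab : a = b := by omega
    rw [hab, hcard] at h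
    rw [hab, ih ((Multiset.cons_inj_right _).1 h)]

theorem betaParts_shiftUp (A : Finset ℕ) (s : ℕ) :
    betaParts (shiftUp A s) = betaParts A + Multiset.replicate s 0 := by
  rw [betaParts, shiftUp_val, Multiset.map_add, Multiset.map_map]
  congr 1
  · refine Multiset.map_congr rfl fun a _ => ?_
    simp only [Function.comp_apply, filter_shiftUp_lt_add, card_shiftUp]
    omega
  · rw [Multiset.eq_replicate]
    refine ⟨by simp, fun m hm => ?_⟩
    obtain ⟨k, hk, rfl⟩ := Multiset.mem_map.1 hm
    rw [filter_shiftUp_lt_of_le A (mem_range.1 hk).le, card_range, Nat.sub_self]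

theorem shiftUp_eq_of_partitionOf_eq {A B : Finset ℕ} {s s' : ℕ}
    (h : partitionOf A = partitionOf B) (hcard : A.card + s = B.card + s') :
    shiftUp A s = shiftUp B s' := by
  apply betaParts_injective
  have hA : Multiset.card (partitionOf A) ≤ A.card :=
    (Multiset.card_le_card (Multiset.filter_le _ _)).trans (card_betaParts A).le
  have hB : Multiset.card (partitionOf B) ≤ B.card :=
    (Multiset.card_le_card (Multiset.filter_le _ _)).trans (card_betaParts B).le
  rw [betaParts_shiftUp, betaParts_shiftUp, betaParts_eq_partitionOf_add,
    betaParts_eq_partitionOf_add, add_assoc, add_assoc, ← Multiset.replicate_add,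
    ← Multiset.replicate_add, ← h]
  rw [← h] at hB
  congr 2
  omega

/-! ### Gaps between two β-sets -/

/-- The range factor only bounds `b`; it is large enough when `0 < d` (see `mem_gapPairs`). -/
def gapPairs (d : ℕ) (A B : Finset ℕ) (c : ℤ) : Finset (ℕ × ℕ) :=
  (A ×ˢ range (A.sup id + c.natAbs + 1)).filter
    fun p => p.2 ∉ B ∧ 0 < (d : ℤ) * ((p.1 : ℤ) - p.2) + c

theorem mem_gapPairs {d : ℕ} (hd : 0 < d) {A B : Finset ℕ} {c : ℤ} {p : ℕ × ℕ} :
    p ∈ gapPairs d A B c ↔ p.1 ∈ A ∧ p.2 ∉ B ∧ 0 < (d : ℤ) * ((p.1 : ℤ) - p.2) + c := by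
  simp only [gapPairs, mem_filter, mem_product, mem_range, and_assoc]
  refine ⟨fun h => ⟨h.1, h.2.2⟩, fun ⟨ha, hb, hpos⟩ => ⟨ha, ?_, hb, hpos⟩⟩
  have hsup : p.1 ≤ A.sup id := le_sup (f := id) ha
  have := le_abs_self c
  rcases le_or_gt p.2 p.1 with h | h
  · omega
  · have : (d : ℤ) * ((p.1 : ℤ) - p.2) ≤ (p.1 : ℤ) - p.2 := by
      nlinarith [show (1 : ℤ) ≤ d by exact_mod_cast hd]
    omega

def gaps (d : ℕ) (A B : Finset ℕ) (c : ℤ) : Multiset ℤ :=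
  (gapPairs d A B c).val.map fun p => (p.1 : ℤ) - p.2

theorem map_gaps (d : ℕ) (A B : Finset ℕ) (c : ℤ) {β : Type*} (f : ℤ → β) :
    (gaps d A B c).map f = ∑ q ∈ gapPairs d A B c, {f ((q.1 : ℤ) - q.2)} := by
  rw [gaps, Multiset.map_map, sum_singleton_eq_map]
  rfl

/-- `#{(a, b) | a ∈ A, b ∈ ℕ \ B, a - b = t}`. -/
def gapCount (A B : Finset ℕ) (t : ℤ) : ℕ :=
  (A.filter fun a : ℕ => t ≤ a ∧ ((a : ℤ) - t).toNat ∉ B).card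

theorem count_gaps {d : ℕ} (hd : 0 < d) (A B : Finset ℕ) (c t : ℤ) :
    (gaps d A B c).count t = if 0 < (d : ℤ) * t + c then gapCount A B t else 0 := by
  classical
  rw [gaps, Multiset.count_map, ← Finset.filter_val, Finset.card_val]
  split_ifs with h
  · refine card_nbij' Prod.fst (fun a => (a, (a - t).toNat)) ?_ ?_ ?_ ?_
    · intro p hp
      simp only [coe_filter, Set.mem_ofPred_eq, mem_gapPairs hd] at hp ⊢
      obtain ⟨⟨ha, hb, -⟩, rfl⟩ := hp
      refine ⟨ha, by omega, ?_⟩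
      rwa [show ((p.1 : ℤ) - ((p.1 : ℤ) - p.2)).toNat = p.2 by omega]
    · intro a ha
      simp only [coe_filter, Set.mem_ofPred_eq, mem_gapPairs hd] at ha ⊢
      obtain ⟨ha, hta, hb⟩ := ha
      refine ⟨⟨ha, hb, ?_⟩, by omega⟩
      rwa [show (a : ℤ) - ((a - t).toNat : ℕ) = t by omega]
    · intro p hp
      simp only [coe_filter, Set.mem_ofPred_eq] at hp
      ext <;> simp only [hp.2]; omega
    · intro a _
      rfl
  · rw [Finset.card_eq_zero, Finset.filter_eq_empty_iff]
    intro p hp ht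
    rw [mem_gapPairs hd] at hp
    exact h (ht ▸ hp.2.2)

theorem gapCount_shiftUp_neg (A B : Finset ℕ) (s : ℕ) :
    gapCount A (shiftUp B s) (-s) = #(A \ B) := by
  rw [gapCount, sdiff_eq_filter]
  congr 1
  refine filter_congr fun a _ => ?_
  rw [show ((a : ℤ) - -(s : ℤ)).toNat = a + s by omega, mem_shiftUp]
  simp

theorem gapCount_shiftUp_pos (A B : Finset ℕ) (s : ℕ) :
    gapCount (shiftUp B s) A s = #(B \ A) := by
  rw [gapCount, sdiff_eq_filter]
  refine card_nbij' (· - s) (· + s) ?_ ?_ ?_ ?_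
  · intro b hb
    simp only [coe_filter, Set.mem_ofPred_eq, mem_shiftUp] at hb ⊢
    obtain ⟨hb | ⟨-, hb⟩, hsb, hbA⟩ := hb
    · omega
    · exact ⟨hb, by rwa [show ((b : ℤ) - s).toNat = b - s by omega] at hbA⟩
  · intro b hb
    simp only [coe_filter, Set.mem_ofPred_eq, mem_shiftUp] at hb ⊢
    refine ⟨Or.inr ⟨by omega, by simpa using hb.1⟩, by omega, ?_⟩
    rw [show ((b + s : ℕ) - (s : ℤ)).toNat = b by omega]
    exact hb.2
  · intro b hb
    simp only [coe_filter, Set.mem_ofPred_eq] at hb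
    simp only
    omega
  · intro b _
    simp

theorem gapCount_range_of_nonneg (N : ℕ) {t : ℤ} (ht : 0 ≤ t) :
    gapCount (range N) (range N) t = 0 := by
  rw [gapCount, card_eq_zero, filter_eq_empty_iff]
  simp only [mem_range, not_and, not_not]
  omega

theorem gapPairs_shiftUp {d : ℕ} (hd : 0 < d) (A B : Finset ℕ) {s s' : ℕ} {k c : ℤ}
    (hk : (s' : ℤ) - s = k) (hc : c ≤ d) :
    gapPairs d (shiftUp A s) (shiftUp B s') (c + d * k) =
      (gapPairs d A B c).map ((addRightEmbedding s).prodMap (addRightEmbedding s')) := by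
  ext ⟨a, b⟩
  simp only [mem_map, mem_gapPairs hd, mem_shiftUp, Function.Embedding.coe_prodMap,
    addRightEmbedding_apply, Prod.exists, Prod.map_apply, Prod.mk.injEq, not_or, not_and]
  constructor
  · rintro ⟨ha | ⟨hsa, ha⟩, ⟨hsb, hb⟩, hpos⟩
    · exfalso
      have : (d : ℤ) * ((a : ℤ) - b) ≤ d * (-k - 1) :=
        mul_le_mul_of_nonneg_left (by omega) (by positivity)
      nlinarith
    · refine ⟨a - s, b - s', ⟨ha, hb (by omega), ?_⟩, by omega, by omega⟩
      push_cast [Nat.cast_sub hsa, Nat.cast_sub (not_lt.1 hsb)]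
      rw [← hk] at hpos
      linarith
  · rintro ⟨a, b, ⟨ha, hb, hpos⟩, rfl, rfl⟩
    refine ⟨Or.inr ⟨by omega, by simpa using ha⟩, ⟨by omega, fun _ => by simpa using hb⟩, ?_⟩
    rw [← hk]
    push_cast
    linarith

theorem map_gaps_shiftUp {α : Type*} {d : ℕ} (hd : 0 < d) (A B : Finset ℕ) {s s' : ℕ}
    {k c : ℤ} (hk : (s' : ℤ) - s = k) (hc : c ≤ d) (f : ℤ → α) :
    (gaps d (shiftUp A s) (shiftUp B s') (c + d * k)).map f =
      (gaps d A B c).map fun t => f (t - k) := by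
  simp only [gaps, gapPairs_shiftUp hd A B hk hc, map_val, Multiset.map_map]
  congr 1
  funext p
  simp only [Function.comp_apply, Function.Embedding.coe_prodMap, Prod.map_fst, Prod.map_snd,
    addRightEmbedding_apply]
  congr 1
  omega

theorem gapCount_neg_eq_add {A B : Finset ℕ} (hAB : A.card = B.card) {s : ℕ}
    (hs : range s ⊆ B) : gapCount A B (-s) = s + gapCount B A s := by
  obtain ⟨B', rfl⟩ := exists_shiftUp_eq hs
  rw [gapCount_shiftUp_neg, gapCount_shiftUp_pos]
  exact card_sdiff_eq_add_card_sdiff (by rw [hAB, card_shiftUp])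

theorem gapCount_range_neg {N s : ℕ} (hs : s ≤ N) :
    gapCount (range N) (range N) (-s) = s := by
  rw [gapCount_neg_eq_add rfl (range_subset_range.2 hs),
    gapCount_range_of_nonneg N (Nat.cast_nonneg s), add_zero]

/-! ### The identity for one pair of components -/

theorem gaps_eq_core_add_quot {d : ℕ} (hd : 0 < d) {A B : Finset ℕ} {N : ℕ}
    (hA : A.card = N) (hB : B.card = N) {e Δ D : ℤ} (hD : D = d * Δ + e) (he : |e| < d)
    (he0 : e = 0 → Δ = 0) (hpad : range Δ.toNat ⊆ B) :
    gaps d A B D = gaps d (range N) (range N) D +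
      (gaps d A B e).filter (fun t => 0 < d * t + D) +
      ((gaps d B A (-e)).filter (fun t => ¬ 0 < d * t - D)).map Neg.neg := by
  ext t
  simp only [Multiset.count_add, Multiset.count_filter, Multiset.count_map_neg, count_gaps hd]
  have hne : |-e| < d := by rwa [abs_neg]
  rw [show (d : ℤ) * t + D = d * (t + Δ) + e by rw [hD]; ring,
    show (d : ℤ) * -t - D = d * (-t - Δ) + -e by rw [hD]; ring]
  simp only [Int.mul_add_pos_iff he, Int.mul_add_pos_iff hne]
  rcases lt_or_ge 0 t with ht | ht
  · rw [gapCount_range_of_nonneg N ht.le]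
    split_ifs <;> omega
  obtain ⟨s, rfl⟩ : ∃ s : ℕ, t = -s := ⟨(-t).toNat, by omega⟩
  by_cases hsΔ : (s : ℤ) ≤ Δ
  · -- at the gap `-s`, `A, B` has `s` more pairs than `B, A`, as many as the core has
    have hs : range s ⊆ B := (range_subset_range.2 (by omega)).trans hpad
    rw [neg_neg, gapCount_neg_eq_add (hA.trans hB.symm) hs,
      gapCount_range_neg (by simpa [hB] using card_le_card hs)]
    split_ifs <;> omega
  · split_ifs <;> omega

theorem map_gaps_eq_core_add_quot {d : ℕ} (hd : 0 < d) {A B : Finset ℕ} {N : ℕ}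
    (hA : A.card = N) (hB : B.card = N) {e Δ D : ℤ} (hD : D = d * Δ + e) (he : |e| < d)
    (he0 : e = 0 → Δ = 0) (hpad : range Δ.toNat ⊆ B) :
    (gaps d A B D).map (fun t => d * t + D) =
      (gaps d (range N) (range N) D).map (fun t => d * t + D) +
      ((gaps d A B e).map fun t => d * t + D).filter (0 < ·) +
      (((gaps d B A (-e)).map fun t => d * t + -D).filter (¬ 0 < ·)).map Neg.neg := by
  rw [gaps_eq_core_add_quot hd hA hB hD he he0 hpad]
  simp only [Multiset.map_add, Multiset.filter_map, Multiset.map_map, Function.comp_def,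
    sub_eq_add_neg]
  congr 2
  funext t
  ring

theorem map_gaps_eq_core_add_quot_of_shiftUp {d : ℕ} (hd : 0 < d)
    {Si Sj Yi Yj : Finset ℕ} {N r : ℕ} (hYi : Yi.card = r) (hYj : Yj.card = r)
    (hi : shiftUp Si (N - Si.card) = shiftUp Yi (N - r))
    (hj : shiftUp Sj (N - Sj.card) = shiftUp Yj (N - r))
    (hxi : Si.card + r ≤ N) (hxj : Sj.card + r ≤ N)
    {e e' D D' : ℤ} (he : |e| < d) (he0 : e = 0 → Si.card = Sj.card) (he' : e' = -e)
    (hD : D = e + d * ((Si.card : ℤ) - Sj.card)) (hD' : D' = -D) :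
    (gaps d Si Sj e).map (fun t => d * t + e) =
      (gaps d (range Si.card) (range Sj.card) e).map (fun t => d * t + e) +
      ((gaps d Yi Yj e).map fun t => d * t + D).filter (0 < ·) +
      (((gaps d Yj Yi e').map fun t => d * t + D').filter (¬ 0 < ·)).map Neg.neg := by
  subst he' hD'
  have hle : e ≤ d := (le_abs_self e).trans he.le
  have hle' : -e ≤ d := (neg_le_abs e).trans he.le
  have hL := map_gaps_shiftUp hd Si Sj (s := N - Si.card) (s' := N - Sj.card)
    (k := (Si.card : ℤ) - Sj.card) (by omega) hle (fun t => d * t + D)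
  have hC := map_gaps_shiftUp hd (range Si.card) (range Sj.card) (s := N - Si.card)
    (s' := N - Sj.card) (k := (Si.card : ℤ) - Sj.card) (by omega) hle (fun t => d * t + D)
  have hQ := map_gaps_shiftUp hd Yi Yj (s := N - r) (s' := N - r) (k := 0) (by omega) hle
    (fun t => d * t + D)
  have hQ' := map_gaps_shiftUp hd Yj Yi (s := N - r) (s' := N - r) (k := 0) (by omega) hle'
    (fun t => d * t + -D)
  rw [hi, hj, ← hD] at hL
  rw [shiftUp_range, shiftUp_range, Nat.add_sub_cancel' (by omega),
    Nat.add_sub_cancel' (by omega), ← hD] at hC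
  simp only [mul_zero, add_zero, sub_zero] at hQ hQ'
  have hv : ∀ t : ℤ, d * (t - ((Si.card : ℤ) - Sj.card)) + D = d * t + e := fun t => by
    rw [hD]; ring
  simp only [hv] at hL hC
  rw [← hL, ← hC, ← hQ, ← hQ']
  refine map_gaps_eq_core_add_quot hd (Δ := (Si.card : ℤ) - Sj.card)
    (by rw [card_shiftUp, hYi]; omega) (by rw [card_shiftUp, hYj]; omega) (by rw [hD]; ring) he
    (fun h => by simp [he0 h]) fun n hn => ?_
  rw [mem_range] at hn
  exact mem_shiftUp.2 (Or.inl (by omega))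

/-! ### Hooks as gaps -/

theorem abs_fin_sub_lt {d : ℕ} (i j : Fin d) : |((i : ℕ) : ℤ) - (j : ℕ)| < d := by
  have := i.isLt
  have := j.isLt
  rw [abs_lt]
  omega

theorem hook_pos_iff {d : ℕ} (i j : Fin d) (a b : ℕ) :
    0 < (d : ℤ) * ((a : ℤ) - b) + ((i : ℕ) - (j : ℕ) : ℤ) ↔ b < a ∨ a = b ∧ j < i := by
  rw [Int.mul_add_pos_iff (abs_fin_sub_lt i j), Fin.lt_def]
  omega

theorem mem_betaHooks {X : Finset ℕ} {p : ℕ × ℕ} :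
    p ∈ betaHooks X ↔ p.1 ∈ X ∧ p.2 < p.1 ∧ p.2 ∉ X := by
  simp only [betaHooks, mem_filter, mem_product, mem_range]
  refine ⟨fun h => ⟨h.1.1, h.2⟩, fun h => ⟨⟨h.1, ?_⟩, h.2⟩⟩
  have := le_sup (f := id) h.1
  simp only [id] at this
  omega

theorem mem_symbolHooks {d : ℕ} {T : Fin d → Finset ℕ} {z : ℕ × ℕ × Fin d × Fin d} :
    z ∈ symbolHooks T ↔ z.1 ∈ T z.2.2.1 ∧ z.2.1 ∉ T z.2.2.2 ∧
      (z.2.1 < z.1 ∨ z.1 = z.2.1 ∧ z.2.2.2 < z.2.2.1) := by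
  simp only [symbolHooks, mem_filter, mem_product, mem_range, mem_univ, and_true]
  refine ⟨fun h => h.2, fun h => ⟨?_, h⟩⟩
  have := (le_sup (f := id) h.1).trans (le_sup (f := fun i => (T i).sup id) (mem_univ z.2.2.1))
  simp only [id] at this
  omega

theorem sd_mem {d : ℕ} (hd : 0 < d) (X : Finset ℕ) (i : Fin d) (k : ℕ) :
    k ∈ sd d X i ↔ (i : ℕ) + k * d ∈ X := by
  simp only [sd, mem_image, mem_filter]
  constructor
  · rintro ⟨a, ⟨ha, hmod⟩, rfl⟩
    rwa [← hmod, Nat.mod_add_div']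
  · intro h
    refine ⟨_, ⟨h, ?_⟩, ?_⟩
    · rw [Nat.add_mul_mod_self_right, Nat.mod_eq_of_lt i.isLt]
    · rw [Nat.add_mul_div_right _ _ hd, Nat.div_eq_of_lt i.isLt, zero_add]

theorem sd_sdInv {d : ℕ} (hd : 0 < d) (T : Fin d → Finset ℕ) : sd d (sdInv d T) = T := by
  funext i
  ext k
  simp only [sd_mem hd, sdInv, mem_biUnion, mem_univ, true_and, mem_image]
  constructor
  · rintro ⟨j, l, hl, hjl⟩
    have hmod := congrArg (· % d) hjl
    have hdiv := congrArg (· / d) hjl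
    simp only [Nat.add_mul_mod_self_right, Nat.mod_eq_of_lt (Fin.isLt _),
      Nat.add_mul_div_right _ _ hd, Nat.div_eq_of_lt (Fin.isLt _), zero_add] at hmod hdiv
    rwa [← Fin.ext hmod, ← hdiv]
  · exact fun hk => ⟨i, k, hk, rfl⟩

theorem div_mod_gap (d a b : ℕ) :
    (d : ℤ) * (((a / d : ℕ) : ℤ) - (b / d : ℕ)) + (((a % d : ℕ) : ℤ) - (b % d : ℕ)) =
      (a : ℤ) - b := by
  have ha : ((d * (a / d) + a % d : ℕ) : ℤ) = a := congrArg _ (Nat.div_add_mod a d)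
  have hb : ((d * (b / d) + b % d : ℕ) : ℤ) = b := congrArg _ (Nat.div_add_mod b d)
  rw [Nat.cast_add, Nat.cast_mul] at ha hb
  linarith

theorem sum_betaHooks {M : Type*} [AddCommMonoid M] {d : ℕ} (hd : 0 < d) (X : Finset ℕ)
    (f : ℤ → M) :
    ∑ p ∈ betaHooks X, f ((p.1 : ℤ) - p.2) =
      ∑ i, ∑ j, ∑ q ∈ gapPairs d (sd d X i) (sd d X j) ((i : ℕ) - (j : ℕ)),
        f (d * ((q.1 : ℤ) - q.2) + ((i : ℕ) - (j : ℕ))) := by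
  rw [← Fintype.sum_prod_type', sum_sigma']
  refine sum_nbij' (fun p => ⟨(⟨p.1 % d, Nat.mod_lt _ hd⟩, ⟨p.2 % d, Nat.mod_lt _ hd⟩),
      (p.1 / d, p.2 / d)⟩) (fun x => ((x.1.1 : ℕ) + x.2.1 * d, (x.1.2 : ℕ) + x.2.2 * d))
    ?_ ?_ ?_ ?_ ?_
  · intro p hp
    rw [mem_betaHooks] at hp
    simp only [mem_sigma, mem_univ, true_and, mem_gapPairs hd, sd_mem hd, Nat.mod_add_div',
      div_mod_gap]
    exact ⟨hp.1, hp.2.2, by omega⟩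
  · rintro ⟨⟨i, j⟩, a, b⟩ hx
    simp only [mem_sigma, mem_univ, true_and, mem_gapPairs hd, sd_mem hd] at hx
    refine mem_betaHooks.2 ⟨hx.1, ?_, hx.2.1⟩
    have := hx.2.2
    push_cast at this ⊢
    linarith
  · intro p _
    simp only [Nat.mod_add_div']
  · rintro ⟨⟨i, j⟩, a, b⟩ _
    simp only [Nat.add_mul_mod_self_right, Nat.mod_eq_of_lt i.isLt, Nat.mod_eq_of_lt j.isLt,
      Nat.add_mul_div_right _ _ hd, Nat.div_eq_of_lt i.isLt, Nat.div_eq_of_lt j.isLt, zero_add]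
  · intro p _
    simp only [div_mod_gap]

theorem sum_symbolHooks {M : Type*} [AddCommMonoid M] {d : ℕ} (hd : 0 < d)
    (T : Fin d → Finset ℕ) (f : ℕ × ℕ × Fin d × Fin d → M) :
    ∑ z ∈ symbolHooks T, f z =
      ∑ i, ∑ j, ∑ q ∈ gapPairs d (T i) (T j) ((i : ℕ) - (j : ℕ)), f (q.1, q.2, i, j) := by
  rw [← Fintype.sum_prod_type', sum_sigma']
  refine sum_nbij' (fun z => ⟨(z.2.2.1, z.2.2.2), (z.1, z.2.1)⟩)
    (fun x => (x.2.1, x.2.2, x.1.1, x.1.2)) ?_ ?_ ?_ ?_ ?_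
  · intro z hz
    simpa only [mem_sigma, mem_univ, true_and, mem_gapPairs hd, hook_pos_iff] using
      mem_symbolHooks.1 hz
  · intro x hx
    simp only [mem_sigma, mem_univ, true_and, mem_gapPairs hd, hook_pos_iff] at hx
    exact mem_symbolHooks.2 hx
  · intro z _
    rfl
  · intro x _
    rfl
  · intro z _
    rfl

/-- `hookLens c d T` in `ℤ` (see `hookLens_eq`), grouped by the components `(i, j)` of the
hooks. -/
def hookValues (d : ℕ) (c : Fin d → ℤ) (T : Fin d → Finset ℕ) : Multiset ℤ :=
  ∑ i, ∑ j, (gaps d (T i) (T j) ((i : ℕ) - (j : ℕ))).map fun t => d * t + (c i - c j)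

theorem map_hookValues {β : Type*} (d : ℕ) (c : Fin d → ℤ) (T : Fin d → Finset ℕ)
    (f : ℤ → β) :
    (hookValues d c T).map f = ∑ i, ∑ j, ∑ q ∈ gapPairs d (T i) (T j) ((i : ℕ) - (j : ℕ)),
      {f (d * ((q.1 : ℤ) - q.2) + (c i - c j))} := by
  simp only [hookValues, Multiset.map_finset_sum, map_gaps]
  rfl

theorem betaHooks_lengths_eq {d : ℕ} (hd : 0 < d) (X : Finset ℕ) :
    (betaHooks X).val.map (fun p => ((p.1 - p.2 : ℕ) : ℝ)) =
      (hookValues d (fun i => (i : ℕ)) (sd d X)).map (↑) := by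
  rw [map_hookValues, ← sum_singleton_eq_map]
  have key := sum_betaHooks hd X fun t => ({(t : ℝ)} : Multiset ℝ)
  refine Eq.trans (sum_congr rfl fun p hp => ?_) key
  rw [Nat.cast_sub (mem_betaHooks.1 hp).2.1.le]
  push_cast
  rfl

theorem hookLens_eq {d : ℕ} (hd : 0 < d) (c : Fin d → ℤ) (T : Fin d → Finset ℕ) :
    hookLens (fun i => (c i : ℝ)) d T = (hookValues d c T).map (↑) := by
  rw [hookLens, map_hookValues, ← sum_singleton_eq_map, sum_symbolHooks hd]
  refine sum_congr rfl fun i _ => sum_congr rfl fun j _ => sum_congr rfl fun q hq => ?_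
  have hpos := ((mem_gapPairs hd).1 hq).2.2
  rw [hook_pos_iff] at hpos
  rw [hookLen]
  dsimp only
  rw [Nat.cast_sub (by omega)]
  push_cast
  ring_nf

theorem hookValues_eq_core_add_abs {d : ℕ} (hd : 0 < d) {S Y : Fin d → Finset ℕ}
    (hY : IsBalancedQuotient S Y) :
    hookValues d (fun i => (i : ℕ)) S =
      hookValues d (fun i => (i : ℕ)) (coreSymbol S) +
        (hookValues d (fun i => (i : ℕ) + (S i).card * d) Y).map abs := by
  set N := quotCard S + ∑ i, (S i).card
  have hx : ∀ i, (S i).card + quotCard S ≤ N := fun i => by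
    have := single_le_sum (f := fun i => (S i).card) (fun _ _ => Nat.zero_le _) (mem_univ i)
    omega
  have hSY : ∀ i, shiftUp (S i) (N - (S i).card) = shiftUp (Y i) (N - quotCard S) := fun i =>
    shiftUp_eq_of_partitionOf_eq (hY i).2.symm (by rw [(hY i).1]; have := hx i; omega)
  simp only [hookValues, coreSymbol, Multiset.map_finset_sum, Multiset.map_abs_eq,
    ← sum_add_distrib, ← add_assoc]
  refine sum_sum_eq_sum_sum_add_swap _ fun i _ j _ => ?_
  exact map_gaps_eq_core_add_quot_of_shiftUp hd (hY i).1 (hY j).1 (hSY i) (hSY j) (hx i) (hx j)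
    (abs_fin_sub_lt i j) (fun h => by rw [Fin.ext (by omega : (i : ℕ) = j)]) (by ring)
    (by ring) (by ring)

/-- `𝓗(λ) = 𝓗(λ_(d)) ∪ abs(𝓗^δ(Q))`: the multiset of hook lengths of a β-set `X`
(equivalently of `λ = p(X)`) equals the multiset of hook lengths of its `d`-core
`C_d(X) = s_d⁻¹(C(s_d X))` together with the absolute values of the `δ`-lengths of
the hooks of the balanced quotient `Q`, where
`δ = (x_0 d, 1 + x_1 d,…,(d−1) + x_{d−1} d; d)` and `x_i = |X_i^{(d)}|`. -/
theorem hooks_eq_core_union_abs_quot (d : ℕ) (hd : 0 < d) (X : Finset ℕ)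
    (Y : Fin d → Finset ℕ) (hY : IsBalancedQuotient (sd d X) Y) :
    (betaHooks X).val.map (fun p => ((p.1 - p.2 : ℕ) : ℝ)) =
      (betaHooks (sdInv d (coreSymbol (sd d X)))).val.map
          (fun p => ((p.1 - p.2 : ℕ) : ℝ)) +
        (hookLens (fun i => ((i : ℕ) : ℝ) + ((sd d X i).card : ℝ) * (d : ℝ)) (d : ℝ) Y).map
          (fun r => |r|) := by
  have hc : (fun i : Fin d => ((i : ℕ) : ℝ) + ((sd d X i).card : ℝ) * (d : ℝ)) =
      fun i : Fin d => (((i : ℕ) + (sd d X i).card * d : ℤ) : ℝ) := by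
    push_cast
    rfl
  rw [betaHooks_lengths_eq hd, betaHooks_lengths_eq hd, sd_sdInv hd, hc, hookLens_eq hd,
    hookValues_eq_core_add_abs hd hY, Multiset.map_add, Multiset.map_map, Multiset.map_map]
  congr 2
  funext r
  simp
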